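/- arXiv:nlin/0103042 — 4 statements merged into one kernel-verified Lean document; each statement's English description precedes it below -/
import Mathlib

section
/- Let n ≥ 1 and let Ω : ℝ → Matrix (Fin n) (Fin n) ℝ be a curve of skew-symmetric matrices (Ω(t)ᵀ = −Ω(t) for all t). Suppose Q, P : ℝ → Matrix (Fin n) (Fin n) ℝ are differentiable and satisfy the symmetric rigid body equations Q'(t) = Q(t)·Ω(t) and P'(t) = P(t)·Ω(t) for all t. Then M(t) := Q(t)ᵀ·P(t) − P(t)ᵀ·Q(t) satisfies the rigid body (Euler) equation M'(t) = M(t)·Ω(t) − Ω(t)·M(t) for all t. -/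
/-!
Both `QᵀP` and `PᵀQ` already satisfy the Euler equation: by the product rule
`(QᵀP)' = (QΩ)ᵀP + QᵀPΩ = ΩᵀQᵀP + QᵀPΩ`, and `Ωᵀ = -Ω` turns this into `QᵀPΩ - ΩQᵀP`.
The Euler equation is linear in `M`, so it passes to the difference `M = QᵀP - PᵀQ`.
-/

open Matrix

section EntrywiseDeriv

variable {𝕜 : Type*} [NontriviallyNormedField 𝕜] {m l n : Type*} [Fintype l]

theorem hasDerivAt_matrix_mul_apply {A : 𝕜 → Matrix m l 𝕜} {B : 𝕜 → Matrix l n 𝕜}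
    {A' : Matrix m l 𝕜} {B' : Matrix l n 𝕜} {t : 𝕜}
    (hA : ∀ i j, HasDerivAt (fun s => A s i j) (A' i j) t)
    (hB : ∀ i j, HasDerivAt (fun s => B s i j) (B' i j) t) (i : m) (j : n) :
    HasDerivAt (fun s => (A s * B s) i j) ((A' * B t + A t * B') i j) t := by
  simp only [mul_apply, Matrix.add_apply, ← Finset.sum_add_distrib]
  exact HasDerivAt.fun_sum fun k _ => (hA i k).fun_mul (hB k j)

theorem hasDerivAt_transpose_mul_apply_of_skew [Fintype n] {Q P : 𝕜 → Matrix l n 𝕜}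
    {Ω : Matrix n n 𝕜} {t : 𝕜} (hΩ : Ωᵀ = -Ω)
    (hQ : ∀ i j, HasDerivAt (fun s => Q s i j) ((Q t * Ω) i j) t)
    (hP : ∀ i j, HasDerivAt (fun s => P s i j) ((P t * Ω) i j) t) (i j : n) :
    HasDerivAt (fun s => ((Q s)ᵀ * P s) i j)
      (((Q t)ᵀ * P t * Ω - Ω * ((Q t)ᵀ * P t)) i j) t := by
  have hQt : ∀ i j, HasDerivAt (fun s => (Q s)ᵀ i j) ((Q t * Ω)ᵀ i j) t := fun i j => hQ j i
  convert hasDerivAt_matrix_mul_apply hQt hP i j using 2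
  rw [transpose_mul, hΩ, Matrix.mul_assoc, Matrix.mul_assoc, neg_mul, sub_eq_neg_add]

end EntrywiseDeriv

theorem symmetric_rigid_body_implies_euler_general
    (n : ℕ)
    (Ω Q P : ℝ → Matrix (Fin n) (Fin n) ℝ)
    (hΩ : ∀ t, (Ω t)ᵀ = -Ω t)
    (hQ : ∀ t i j, HasDerivAt (fun s => Q s i j) ((Q t * Ω t) i j) t)
    (hP : ∀ t i j, HasDerivAt (fun s => P s i j) ((P t * Ω t) i j) t)
    (M : ℝ → Matrix (Fin n) (Fin n) ℝ)
    (hM : ∀ t, M t = (Q t)ᵀ * P t - (P t)ᵀ * Q t) :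
    ∀ t i j, HasDerivAt (fun s => M s i j) ((M t * Ω t - Ω t * M t) i j) t := by
  intro t i j
  have hQP := hasDerivAt_transpose_mul_apply_of_skew (hΩ t) (hQ t) (hP t) i j
  have hPQ := hasDerivAt_transpose_mul_apply_of_skew (hΩ t) (hP t) (hQ t) i j
  have hEuler : M t * Ω t - Ω t * M t
      = ((Q t)ᵀ * P t * Ω t - Ω t * ((Q t)ᵀ * P t))
        - ((P t)ᵀ * Q t * Ω t - Ω t * ((P t)ᵀ * Q t)) := by
    rw [hM]; noncomm_ring
  rw [hEuler, Matrix.sub_apply, funext hM]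
  exact hQP.fun_sub hPQ

/-- The symmetric rigid body equations `Q' = QΩ`, `P' = PΩ` imply the rigid body
(Euler) equation `M' = MΩ - ΩM` for `M = QᵀP - PᵀQ`. -/
theorem symmetric_rigid_body_implies_euler
    (n : ℕ) (hn : 1 ≤ n)
    (Ω Q P : ℝ → Matrix (Fin n) (Fin n) ℝ)
    (hΩ : ∀ t, (Ω t)ᵀ = -Ω t)
    (hQ : ∀ t i j, HasDerivAt (fun s => Q s i j) ((Q t * Ω t) i j) t)
    (hP : ∀ t i j, HasDerivAt (fun s => P s i j) ((P t * Ω t) i j) t)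
    (M : ℝ → Matrix (Fin n) (Fin n) ℝ)
    (hM : ∀ t, M t = (Q t)ᵀ * P t - (P t)ᵀ * Q t) :
    ∀ t i j, HasDerivAt (fun s => M s i j) ((M t * Ω t - Ω t * M t) i j) t :=
  symmetric_rigid_body_implies_euler_general n Ω Q P hΩ hQ hP M hM
end

section
/- Let n ≥ 1 and let Λ be a diagonal real n×n matrix whose diagonal entries satisfy Λᵢᵢ + Λⱼⱼ > 0 for all i ≠ j. Define J(Ω) = Λ·Ω + Ω·Λ. Then for every skew-symmetric matrix Ω (Ωᵀ = −Ω) with Ω ≠ 0, one has trace(Ωᵀ·J(Ω)) > 0. -/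
open Matrix

/-- The rigid-body inertia operator `J(Ω) = ΛΩ + ΩΛ`, with `Λ` diagonal and
`Λᵢᵢ + Λⱼⱼ > 0` for `i ≠ j`, is positive definite on nonzero skew-symmetric
matrices with respect to the trace inner product `⟨A, B⟩ = trace(AᵀB)`. -/
theorem inertia_operator_pos_def
    (n : ℕ) (hn : 1 ≤ n)
    (Λ : Matrix (Fin n) (Fin n) ℝ)
    (hdiag : ∀ i j, i ≠ j → Λ i j = 0)
    (hpos : ∀ i j : Fin n, i ≠ j → 0 < Λ i i + Λ j j)
    (Ω : Matrix (Fin n) (Fin n) ℝ)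
    (hskew : Ωᵀ = -Ω) (hne : Ω ≠ 0) :
    0 < Matrix.trace (Ωᵀ * (Λ * Ω + Ω * Λ)) := by
  set d : Fin n → ℝ := fun i => Λ i i with hd
  have hΛ : Λ = Matrix.diagonal d := by
    ext i j
    by_cases h : i = j
    · subst h; simp [Matrix.diagonal, d]
    · simp [Matrix.diagonal, h, hdiag i j h]
  have hdiag0 : ∀ i, Ω i i = 0 := by
    intro i
    have := congrFun (congrFun hskew i) i
    simp [Matrix.transpose_apply] at this
    linarith
  have key : Matrix.trace (Ωᵀ * (Λ * Ω + Ω * Λ))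
      = ∑ i, ∑ k, (d k + d i) * (Ω k i) ^ 2 := by
    rw [hΛ]
    simp only [Matrix.trace, Matrix.diag, Matrix.mul_apply, Matrix.add_apply,
      Matrix.transpose_apply, Matrix.diagonal_apply, Finset.mul_sum]
    apply Finset.sum_congr rfl
    intro i _
    apply Finset.sum_congr rfl
    intro k _
    simp [Finset.mul_sum, Finset.sum_ite_eq, Finset.sum_ite_eq']
    ring
  rw [key]
  obtain ⟨a, b, hab⟩ : ∃ a b, Ω a b ≠ 0 := by
    by_contra h
    push_neg at h
    exact hne (by ext i j; simp [h])
  have hab' : a ≠ b := fun h => hab (h ▸ hdiag0 a)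
  have hterm : ∀ k i : Fin n, 0 ≤ (d k + d i) * (Ω k i) ^ 2 := by
    intro k i
    by_cases h : k = i
    · subst h; simp [hdiag0]
    · exact mul_nonneg (hpos k i h).le (sq_nonneg _)
  apply Finset.sum_pos'
  · intro i _
    exact Finset.sum_nonneg fun k _ => hterm k i
  · refine ⟨b, Finset.mem_univ b, Finset.sum_pos' (fun k _ => hterm k b) ⟨a, Finset.mem_univ a, ?_⟩⟩
    exact mul_pos (hpos a b hab') (pow_pos (abs_pos.mpr hab) 2 |>.trans_le (by rw [sq_abs]))
end

section
/- (Vorticity equation.) Let v, z : ℝ³ × ℝ → ℝ³ be twice continuously differentiable time-dependent vector fields with curl z(x,t) = curl v(x,t) for all (x,t) and div v(x,t) = 0 for all (x,t), and suppose z satisfies the impulse equation ∂z/∂t + Dz·v + (Dv)ᵀ·z = 0 everywhere. Set w := curl v. Then w satisfies the vorticity equation ∂w/∂t(x,t) + Dw(x,t) v(x,t) − Dv(x,t) w(x,t) = 0 for all (x,t), i.e. ∂w/∂t + [v, w] = 0 where [v,w] = (v·∇)w − (w·∇)v is the Lie bracket of vector fields. -/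
open Matrix

/-- The Jacobian matrix of a vector field `u : ℝ³ → ℝ³` at `x`:
`(jacAt u x) i j = ∂uᵢ/∂xⱼ (x)`. -/
noncomputable def jacAt (u : (Fin 3 → ℝ) → (Fin 3 → ℝ)) (x : Fin 3 → ℝ) :
    Matrix (Fin 3) (Fin 3) ℝ :=
  fun i j => fderiv ℝ u x (Pi.single j 1) i

/-- The gradient of a scalar function `f : ℝ³ → ℝ` at `x`. -/
noncomputable def gradAt (f : (Fin 3 → ℝ) → ℝ) (x : Fin 3 → ℝ) : Fin 3 → ℝ :=
  fun i => fderiv ℝ f x (Pi.single i 1)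

/-- The curl of a vector field `u : ℝ³ → ℝ³` at `x`. -/
noncomputable def curlAt (u : (Fin 3 → ℝ) → (Fin 3 → ℝ)) (x : Fin 3 → ℝ) : Fin 3 → ℝ :=
  ![jacAt u x 2 1 - jacAt u x 1 2,
    jacAt u x 0 2 - jacAt u x 2 0,
    jacAt u x 1 0 - jacAt u x 0 1]

/-- The divergence of a vector field `u : ℝ³ → ℝ³` at `x`. -/
noncomputable def divAt (u : (Fin 3 → ℝ) → (Fin 3 → ℝ)) (x : Fin 3 → ℝ) : ℝ :=
  ∑ i, jacAt u x i i

/-!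
Since `Dz·v − (Dz)ᵀ·v = (curl z) × v`, the impulse equation reads
`∂z/∂t + (curl z) × v + grad (z · v) = 0`. Taking the spatial curl, which kills the gradient and
commutes with `∂/∂t` by symmetry of second derivatives, and using `curl z = curl v = w` gives
`∂w/∂t + curl (w × v) = 0`. Finally `curl (w × v) = (div v) w − (div w) v + Dw·v − Dv·w`, where
`div v = 0` by hypothesis and `div w = div curl v = 0`.
-/

local notation "ℝ³" => Fin 3 → ℝ

section Calculus

variable {E F G H : Type*} [NormedAddCommGroup E] [NormedSpace ℝ E]
  [NormedAddCommGroup F] [NormedSpace ℝ F] [NormedAddCommGroup G] [NormedSpace ℝ G]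
  [NormedAddCommGroup H] [NormedSpace ℝ H]

theorem ContDiffAt.differentiableAt_fderiv {u : E → F} {x : E} (hu : ContDiffAt ℝ 2 u x) :
    DifferentiableAt ℝ (fderiv ℝ u) x :=
  (hu.fderiv_right (m := 1) le_rfl).differentiableAt one_ne_zero

theorem hasFDerivAt_fderiv_apply {u : E → F} {x : E} (hu : DifferentiableAt ℝ (fderiv ℝ u) x)
    (a : E) : HasFDerivAt (fun y => fderiv ℝ u y a) ((fderiv ℝ (fderiv ℝ u) x).flip a) x := by
  simpa using hu.hasFDerivAt.clm_apply (hasFDerivAt_const a x)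

theorem fderiv_bilinear_apply [FiniteDimensional ℝ F] [FiniteDimensional ℝ G]
    (B : F →ₗ[ℝ] G →ₗ[ℝ] H) {a : E → F} {b : E → G} {x : E}
    (ha : DifferentiableAt ℝ a x) (hb : DifferentiableAt ℝ b x) (c : E) :
    fderiv ℝ (fun y => B (a y) (b y)) x c = B (fderiv ℝ a x c) (b x) + B (a x) (fderiv ℝ b x c) := by
  have h := B.toContinuousBilinearMap.fderiv_of_bilinear ha hb
  simp only [LinearMap.toContinuousBilinearMap_apply] at h
  simp [h, add_comm]

theorem DifferentiableAt.bilinear [FiniteDimensional ℝ F] [FiniteDimensional ℝ G]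
    (B : F →ₗ[ℝ] G →ₗ[ℝ] H) {a : E → F} {b : E → G} {x : E}
    (ha : DifferentiableAt ℝ a x) (hb : DifferentiableAt ℝ b x) :
    DifferentiableAt ℝ (fun y => B (a y) (b y)) x :=
  (B.toContinuousBilinearMap.hasFDerivAt_of_bilinear ha.hasFDerivAt hb.hasFDerivAt).differentiableAt

theorem ContDiff.bilinear [FiniteDimensional ℝ F] [FiniteDimensional ℝ G]
    (B : F →ₗ[ℝ] G →ₗ[ℝ] H) {a : E → F} {b : E → G} {n : WithTop ℕ∞}
    (ha : ContDiff ℝ n a) (hb : ContDiff ℝ n b) : ContDiff ℝ n (fun y => B (a y) (b y)) :=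
  (B.toContinuousBilinearMap.contDiff.comp ha).clm_apply hb

theorem hasDerivAt_fderiv_slice {u : E × ℝ → F} (hu : ContDiff ℝ 2 u) (x : E) (t : ℝ) :
    HasDerivAt (fun s => fderiv ℝ (fun y => u (y, s)) x)
      (fderiv ℝ (fun y => deriv (fun s => u (y, s)) t) x) t := by
  have hu1 : Differentiable ℝ u := hu.differentiable two_ne_zero
  have hu2 : Differentiable ℝ (fderiv ℝ u) := fun p => hu.contDiffAt.differentiableAt_fderiv
  have hspace : ∀ s, fderiv ℝ (fun y => u (y, s)) x
      = (fderiv ℝ u (x, s)).comp (ContinuousLinearMap.inl ℝ E ℝ) := fun s =>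
    ((hu1 _).hasFDerivAt.comp x (hasFDerivAt_prodMk_left x s)).fderiv
  have htime : ∀ y, deriv (fun s => u (y, s)) t = fderiv ℝ u (y, t) (0, 1) := fun y =>
    ((hu1 _).hasFDerivAt.comp_hasDerivAt t ((hasDerivAt_const t y).prodMk (hasDerivAt_id t))).deriv
  have hsymm := (hu.contDiffAt (x := (x, t))).isSymmSndFDerivAt (by simp)
  have hD : HasDerivAt (fun s => fderiv ℝ u (x, s)) (fderiv ℝ (fderiv ℝ u) (x, t) (0, 1)) t :=
    (hu2 _).hasFDerivAt.comp_hasDerivAt t ((hasDerivAt_const t x).prodMk (hasDerivAt_id t))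
  have hslice : HasFDerivAt (fun y => fderiv ℝ u (y, t))
      ((fderiv ℝ (fderiv ℝ u) (x, t)).comp (ContinuousLinearMap.inl ℝ E ℝ)) x :=
    (hu2 _).hasFDerivAt.comp x (hasFDerivAt_prodMk_left x t)
  have hF := hslice.clm_apply (hasFDerivAt_const ((0, 1) : E × ℝ) x)
  rw [funext hspace, funext htime, hF.fderiv]
  convert hD.clm_comp (hasDerivAt_const t (ContinuousLinearMap.inl ℝ E ℝ)) using 1
  ext e
  simp [hsymm.eq]

end Calculus

section VectorCalculus

variable {u a b : ℝ³ → ℝ³} {x : ℝ³}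

theorem jacAt_apply_of_hasFDerivAt {L : Fin 3 → ℝ³ →L[ℝ] ℝ}
    (hu : ∀ i, HasFDerivAt (fun y => u y i) (L i) x) (i j : Fin 3) :
    jacAt u x i j = L i (Pi.single j 1) := by
  rw [jacAt, (hasFDerivAt_pi.2 hu).fderiv]
  rfl

theorem jacAt_add (hu : DifferentiableAt ℝ u x) (ha : DifferentiableAt ℝ a x) :
    jacAt (u + a) x = jacAt u x + jacAt a x := by
  ext i j
  simp [jacAt, fderiv_add hu ha]

theorem curlAt_add (hu : DifferentiableAt ℝ u x) (ha : DifferentiableAt ℝ a x) :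
    curlAt (u + a) x = curlAt u x + curlAt a x := by
  ext k
  fin_cases k <;> simp [curlAt, jacAt_add hu ha] <;> ring

theorem curlAt_neg : curlAt (-u) x = -curlAt u x := by
  ext k
  fin_cases k <;> simp [curlAt, jacAt, fderiv_neg] <;> ring

theorem jacAt_mulVec_sub_transpose_mulVec (c : ℝ³) :
    jacAt u x *ᵥ c - (jacAt u x)ᵀ *ᵥ c = curlAt u x ⨯₃ c := by
  ext k
  fin_cases k <;> simp [curlAt, cross_apply, mulVec, dotProduct, Fin.sum_univ_three] <;> ring

theorem gradAt_dotProduct (ha : DifferentiableAt ℝ a x) (hb : DifferentiableAt ℝ b x) :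
    gradAt (fun y => a y ⬝ᵥ b y) x = (jacAt a x)ᵀ *ᵥ b x + (jacAt b x)ᵀ *ᵥ a x := by
  ext i
  have h := fderiv_bilinear_apply (dotProductBilin ℝ ℝ) ha hb (Pi.single i 1)
  simp only [dotProductBilin_apply_apply] at h
  rw [gradAt, h]
  simp [jacAt, mulVec, dotProduct, mul_comm]

theorem jacAt_mulVec_add_transpose_mulVec (ha : DifferentiableAt ℝ a x)
    (hb : DifferentiableAt ℝ b x) :
    jacAt a x *ᵥ b x + (jacAt b x)ᵀ *ᵥ a x
      = curlAt a x ⨯₃ b x + gradAt (fun y => a y ⬝ᵥ b y) x := by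
  rw [← jacAt_mulVec_sub_transpose_mulVec, gradAt_dotProduct ha hb]
  abel

theorem curlAt_cross (ha : DifferentiableAt ℝ a x) (hb : DifferentiableAt ℝ b x) :
    curlAt (fun y => a y ⨯₃ b y) x
      = divAt b x • a x - divAt a x • b x + jacAt a x *ᵥ b x - jacAt b x *ᵥ a x := by
  have hjac : ∀ i j, jacAt (fun y => a y ⨯₃ b y) x i j
      = (fderiv ℝ a x (Pi.single j 1) ⨯₃ b x + a x ⨯₃ fderiv ℝ b x (Pi.single j 1)) i :=
    fun i j => congrFun (fderiv_bilinear_apply crossProduct ha hb _) i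
  ext k
  simp only [curlAt, divAt, hjac]
  fin_cases k <;>
    simp [cross_apply, mulVec, dotProduct, Fin.sum_univ_three, jacAt] <;> ring

end VectorCalculus

section SecondDerivatives

variable {u : ℝ³ → ℝ³} {f : ℝ³ → ℝ} {x : ℝ³}

theorem hasFDerivAt_jacAt_apply (hu : DifferentiableAt ℝ (fderiv ℝ u) x) (i j : Fin 3) :
    HasFDerivAt (fun y => jacAt u y i j)
      ((ContinuousLinearMap.proj i).comp ((fderiv ℝ (fderiv ℝ u) x).flip (Pi.single j 1))) x :=
  hasFDerivAt_pi'.1 (hasFDerivAt_fderiv_apply hu _) i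

theorem differentiableAt_curlAt (hu : DifferentiableAt ℝ (fderiv ℝ u) x) :
    DifferentiableAt ℝ (curlAt u) x := by
  rw [differentiableAt_pi]
  intro k
  fin_cases k <;>
    exact ((hasFDerivAt_jacAt_apply hu _ _).sub (hasFDerivAt_jacAt_apply hu _ _)).differentiableAt

theorem differentiableAt_gradAt (hf : DifferentiableAt ℝ (fderiv ℝ f) x) :
    DifferentiableAt ℝ (gradAt f) x :=
  differentiableAt_pi.2 fun i => (hasFDerivAt_fderiv_apply hf (Pi.single i 1)).differentiableAt

theorem curlAt_gradAt (hf : ContDiffAt ℝ 2 f x) : curlAt (gradAt f) x = 0 := by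
  have hd := hf.differentiableAt_fderiv
  have hsymm := hf.isSymmSndFDerivAt (by simp)
  have hjac := jacAt_apply_of_hasFDerivAt (u := gradAt f)
    fun i => hasFDerivAt_fderiv_apply hd (Pi.single i 1)
  ext k
  fin_cases k <;> simp [curlAt, hjac, hsymm.eq]

theorem divAt_curlAt (hu : ContDiffAt ℝ 2 u x) : divAt (curlAt u) x = 0 := by
  have hd := hu.differentiableAt_fderiv
  have hsymm := hu.isSymmSndFDerivAt (by simp)
  have hJ := hasFDerivAt_jacAt_apply hd
  have hjac := jacAt_apply_of_hasFDerivAt (u := curlAt u) (L := ![_, _, _]) fun k => by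
    fin_cases k
    exacts [(hJ 2 1).sub (hJ 1 2), (hJ 0 2).sub (hJ 2 0), (hJ 1 0).sub (hJ 0 1)]
  simp [divAt, Fin.sum_univ_three, hjac, hsymm.eq]

theorem curlAt_curlAt_cross (hu : ContDiffAt ℝ 2 u x) (hdiv : divAt u x = 0) :
    curlAt (fun y => curlAt u y ⨯₃ u y) x = jacAt (curlAt u) x *ᵥ u x - jacAt u x *ᵥ curlAt u x := by
  rw [curlAt_cross (differentiableAt_curlAt hu.differentiableAt_fderiv)
    (hu.differentiableAt two_ne_zero), hdiv, divAt_curlAt hu]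
  simp

theorem hasDerivAt_curlAt_slice {u : ℝ³ × ℝ → ℝ³} (hu : ContDiff ℝ 2 u) (x : ℝ³) (t : ℝ) :
    HasDerivAt (fun s => curlAt (fun y => u (y, s)) x)
      (curlAt (fun y => deriv (fun s => u (y, s)) t) x) t := by
  have hjac : ∀ i j, HasDerivAt (fun s => jacAt (fun y => u (y, s)) x i j)
      (jacAt (fun y => deriv (fun s => u (y, s)) t) x i j) t := fun i j => by
    simpa [jacAt] using hasDerivAt_pi.1 ((hasDerivAt_fderiv_slice hu x t).clm_apply
      (hasDerivAt_const t (Pi.single j (1 : ℝ)))) i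
  rw [hasDerivAt_pi]
  intro k
  fin_cases k
  exacts [(hjac 2 1).sub (hjac 1 2), (hjac 0 2).sub (hjac 2 0), (hjac 1 0).sub (hjac 0 1)]

end SecondDerivatives

/-- Vorticity equation: if `z` satisfies the impulse equation
`∂z/∂t + Dz·v + (Dv)ᵀ·z = 0`, with `curl z = curl v` and `div v = 0`, then
`w := curl v` satisfies `∂w/∂t + Dw·v − Dv·w = 0`, i.e. `∂w/∂t + [v, w] = 0`. -/
theorem vorticity_equation
    (v z : (Fin 3 → ℝ) × ℝ → (Fin 3 → ℝ))
    (hv : ContDiff ℝ 2 v) (hz : ContDiff ℝ 2 z)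
    (hcurl : ∀ (x : Fin 3 → ℝ) (t : ℝ),
      curlAt (fun y => z (y, t)) x = curlAt (fun y => v (y, t)) x)
    (hdiv : ∀ (x : Fin 3 → ℝ) (t : ℝ), divAt (fun y => v (y, t)) x = 0)
    (himp : ∀ (x : Fin 3 → ℝ) (t : ℝ),
      deriv (fun s => z (x, s)) t
        + jacAt (fun y => z (y, t)) x *ᵥ v (x, t)
        + (jacAt (fun y => v (y, t)) x)ᵀ *ᵥ z (x, t) = 0)
    (w : (Fin 3 → ℝ) × ℝ → (Fin 3 → ℝ))
    (hw : ∀ (x : Fin 3 → ℝ) (t : ℝ), w (x, t) = curlAt (fun y => v (y, t)) x) :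
    ∀ (x : Fin 3 → ℝ) (t : ℝ),
      deriv (fun s => w (x, s)) t
        + jacAt (fun y => w (y, t)) x *ᵥ v (x, t)
        - jacAt (fun y => v (y, t)) x *ᵥ w (x, t) = 0 := by
  intro x t
  set vt := fun y => v (y, t)
  set zt := fun y => z (y, t)
  have hvt : ContDiff ℝ 2 vt := hv.comp (contDiff_id.prodMk contDiff_const)
  have hzt : ContDiff ℝ 2 zt := hz.comp (contDiff_id.prodMk contDiff_const)
  have hdot : ContDiff ℝ 2 (fun y => zt y ⬝ᵥ vt y) := hzt.bilinear (dotProductBilin ℝ ℝ) hvt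
  have hflux : (fun y => deriv (fun s => z (y, s)) t)
      = -((fun y => curlAt vt y ⨯₃ vt y) + gradAt (fun y => zt y ⬝ᵥ vt y)) := by
    funext y
    rw [Pi.neg_apply, Pi.add_apply, ← hcurl y t, ← jacAt_mulVec_add_transpose_mulVec
      (hzt.differentiable two_ne_zero y) (hvt.differentiable two_ne_zero y)]
    exact eq_neg_of_add_eq_zero_left ((add_assoc _ _ _).symm.trans (himp y t))
  have hdt : deriv (fun s => w (x, s)) t = curlAt (fun y => deriv (fun s => z (y, s)) t) x := by
    rw [show (fun s => w (x, s)) = fun s => curlAt (fun y => z (y, s)) x from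
      funext fun s => (hw x s).trans (hcurl x s).symm]
    exact (hasDerivAt_curlAt_slice hz x t).deriv
  have hcross : DifferentiableAt ℝ (fun y => curlAt vt y ⨯₃ vt y) x :=
    (differentiableAt_curlAt hvt.contDiffAt.differentiableAt_fderiv).bilinear crossProduct
      (hvt.differentiable two_ne_zero x)
  rw [hdt, hflux, curlAt_neg,
    curlAt_add hcross (differentiableAt_gradAt hdot.contDiffAt.differentiableAt_fderiv),
    curlAt_gradAt hdot.contDiffAt, curlAt_curlAt_cross hvt.contDiffAt (hdiv x t),
    funext fun y => hw y t, hw x t]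
  simp [vt]
end

section
/- (Conservation of the canonical one-form along extremals.) Let v : ℝ³ × ℝ → ℝ³ be continuously differentiable in the spatial variable. Let φ : ℝ³ × ℝ → ℝ³ be twice continuously differentiable and π : ℝ³ × ℝ → ℝ³ be differentiable, satisfying the extremal equations ∂φ/∂t(X,t) = v(φ(X,t), t) and ∂π/∂t(X,t) = −(Dv(φ(X,t), t))ᵀ π(X,t) for all (X,t). Then for every X ∈ ℝ³, the map t ↦ (D_X φ(X,t))ᵀ π(X,t) is constant; i.e. ∂/∂t [ Σᵢ πᵢ(X,t) dφᵢ(X,t) ] = 0. -/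
/-!
Fix `X` and a column `a(t) = D_X φ(X, t) eⱼ`. By symmetry of second derivatives,
`∂ₜ D_X φ = D_X ∂ₜ φ = D_X (v(φ, t)) = Dv(φ, t) D_X φ`, so `a' = Dv a`, while `π' = -Dvᵀ π`.
Hence `(π ⬝ a)' = -(Dvᵀ π) ⬝ a + π ⬝ (Dv a) = 0`, and `π ⬝ a` is the `j`-th entry of `(D_X φ)ᵀ π`.
-/

open Matrix

section PartialDerivatives

variable {E F : Type*} [NormedAddCommGroup E] [NormedSpace ℝ E]
  [NormedAddCommGroup F] [NormedSpace ℝ F]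

theorem hasFDerivAt_partial_left {f : E × ℝ → F} {X : E} {t : ℝ}
    (hf : DifferentiableAt ℝ f (X, t)) :
    HasFDerivAt (fun Y => f (Y, t)) ((fderiv ℝ f (X, t)).comp (.inl ℝ E ℝ)) X :=
  hf.hasFDerivAt.comp X (hasFDerivAt_prodMk_left X t)

theorem hasDerivAt_partial_right {f : E × ℝ → F} {X : E} {t : ℝ}
    (hf : DifferentiableAt ℝ f (X, t)) :
    HasDerivAt (fun s => f (X, s)) (fderiv ℝ f (X, t) (0, 1)) t :=
  hf.hasFDerivAt.comp_hasDerivAt t ((hasDerivAt_const t X).prodMk (hasDerivAt_id t))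

/-- Schwarz's theorem, in the form `∂ₜ D_X f = D_X ∂ₜ f`. -/
theorem hasDerivAt_fderiv_partial_left {f : E × ℝ → F} (hf : ContDiff ℝ 2 f) (X : E) (t : ℝ) :
    HasDerivAt (fun s => fderiv ℝ (fun Y => f (Y, s)) X)
      (fderiv ℝ (fun Y => deriv (fun s => f (Y, s)) t) X) t := by
  have hdf : Differentiable ℝ f := hf.differentiable two_ne_zero
  have hD : HasFDerivAt (fderiv ℝ f) (fderiv ℝ (fderiv ℝ f) (X, t)) (X, t) :=
    ((hf.fderiv_right le_rfl).differentiable one_ne_zero (X, t)).hasFDerivAt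
  have hsymm := hf.contDiffAt.isSymmSndFDerivAt (x := (X, t)) (by simp)
  have hleft : (fun s => fderiv ℝ (fun Y => f (Y, s)) X)
      = fun s => (fderiv ℝ f (X, s)).comp (.inl ℝ E ℝ) :=
    funext fun s => (hasFDerivAt_partial_left (hdf (X, s))).fderiv
  have hright : (fun Y => deriv (fun s => f (Y, s)) t) = fun Y => fderiv ℝ f (Y, t) (0, 1) :=
    funext fun Y => (hasDerivAt_partial_right (hdf (Y, t))).deriv
  have hcross : HasFDerivAt (fun Y => fderiv ℝ f (Y, t) (0, 1))
      (((fderiv ℝ (fderiv ℝ f) (X, t)).comp (.inl ℝ E ℝ)).flip (0, 1)) X := by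
    have hDleft : HasFDerivAt (fun Y => fderiv ℝ f (Y, t))
        ((fderiv ℝ (fderiv ℝ f) (X, t)).comp (.inl ℝ E ℝ)) X :=
      hD.comp X (hasFDerivAt_prodMk_left X t)
    simpa using hDleft.clm_apply (hasFDerivAt_const _ X)
  rw [hleft, hright, hcross.fderiv]
  have htime := (hD.comp_hasDerivAt t ((hasDerivAt_const t X).prodMk (hasDerivAt_id t))).clm_comp
    (hasDerivAt_const t (ContinuousLinearMap.inl ℝ E ℝ))
  refine htime.congr_deriv ?_
  ext w
  simp [hsymm (w, 0)]

theorem hasDerivAt_fderiv_of_flow {φ : E × ℝ → F} {v : F × ℝ → F}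
    (hφ : ContDiff ℝ 2 φ) {X : E} {t : ℝ}
    (hv : DifferentiableAt ℝ (fun y => v (y, t)) (φ (X, t)))
    (hφeq : ∀ Y, deriv (fun s => φ (Y, s)) t = v (φ (Y, t), t)) :
    HasDerivAt (fun s => fderiv ℝ (fun Y => φ (Y, s)) X)
      ((fderiv ℝ (fun y => v (y, t)) (φ (X, t))).comp (fderiv ℝ (fun Y => φ (Y, t)) X)) t := by
  have hφX : HasFDerivAt (fun Y => φ (Y, t)) (fderiv ℝ (fun Y => φ (Y, t)) X) X :=
    (hasFDerivAt_partial_left ((hφ.differentiable two_ne_zero) (X, t))).differentiableAt.hasFDerivAt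
  have hmixed := hasDerivAt_fderiv_partial_left hφ X t
  rw [funext hφeq] at hmixed
  have hchain : HasFDerivAt (fun Y => v (φ (Y, t), t))
      ((fderiv ℝ (fun y => v (y, t)) (φ (X, t))).comp (fderiv ℝ (fun Y => φ (Y, t)) X)) X :=
    HasFDerivAt.comp (g := fun y => v (y, t)) X hv.hasFDerivAt hφX
  exact hmixed.congr_deriv hchain.fderiv

end PartialDerivatives

theorem dotProduct_eq_of_hasDerivAt_adjoint {n : Type*} [Fintype n] (B : ℝ → Matrix n n ℝ)
    {a p : ℝ → n → ℝ} (ha : ∀ t, HasDerivAt a (B t *ᵥ a t) t)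
    (hp : ∀ t, HasDerivAt p (-((B t)ᵀ *ᵥ p t)) t) (t₁ t₂ : ℝ) :
    p t₁ ⬝ᵥ a t₁ = p t₂ ⬝ᵥ a t₂ := by
  have hderiv : ∀ t, HasDerivAt (fun s => p s ⬝ᵥ a s) 0 t := by
    intro t
    have hsum : HasDerivAt (fun s => p s ⬝ᵥ a s)
        (∑ i, ((-((B t)ᵀ *ᵥ p t)) i * a t i + p t i * (B t *ᵥ a t) i)) t :=
      HasDerivAt.fun_sum fun i _ => (hasDerivAt_pi.1 (hp t) i).mul (hasDerivAt_pi.1 (ha t) i)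
    refine hsum.congr_deriv ?_
    rw [Finset.sum_add_distrib]
    change -((B t)ᵀ *ᵥ p t) ⬝ᵥ a t + p t ⬝ᵥ (B t *ᵥ a t) = 0
    rw [neg_dotProduct, mulVec_transpose, dotProduct_mulVec, neg_add_cancel]
  exact is_const_of_deriv_eq_zero (fun t => (hderiv t).differentiableAt)
    (fun t => (hderiv t).deriv) t₁ t₂

theorem jacAt_eq_toMatrix' (u : (Fin 3 → ℝ) → (Fin 3 → ℝ)) (x : Fin 3 → ℝ) :
    jacAt u x = LinearMap.toMatrix' (fderiv ℝ u x : (Fin 3 → ℝ) →ₗ[ℝ] (Fin 3 → ℝ)) := by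
  ext i j
  simp [jacAt, LinearMap.toMatrix'_apply]

theorem jacAt_mulVec (u : (Fin 3 → ℝ) → (Fin 3 → ℝ)) (x w : Fin 3 → ℝ) :
    jacAt u x *ᵥ w = fderiv ℝ u x w := by
  rw [jacAt_eq_toMatrix', LinearMap.toMatrix'_mulVec]
  rfl

theorem jacAt_transpose_mulVec_apply (u : (Fin 3 → ℝ) → (Fin 3 → ℝ)) (x p : Fin 3 → ℝ)
    (j : Fin 3) : ((jacAt u x)ᵀ *ᵥ p) j = p ⬝ᵥ fderiv ℝ u x (Pi.single j 1) := by
  rw [← jacAt_mulVec, mulVec_single_one, dotProduct_comm]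
  rfl

/-- Conservation of the canonical one-form `Σᵢ πᵢ dφᵢ` along extremals of the
optimal control problem: if `∂φ/∂t = v ∘ φ` and `∂π/∂t = −(Dv ∘ φ)ᵀ π`, then
`t ↦ (D_X φ)ᵀ π` is constant for each `X`. -/
theorem canonical_one_form_conserved
    (v : (Fin 3 → ℝ) × ℝ → (Fin 3 → ℝ))
    (hv : ∀ t : ℝ, ContDiff ℝ 1 (fun x => v (x, t)))
    (φ π : (Fin 3 → ℝ) × ℝ → (Fin 3 → ℝ))
    (hφ : ContDiff ℝ 2 φ) (hπ : Differentiable ℝ π)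
    (hφeq : ∀ (X : Fin 3 → ℝ) (t : ℝ),
      deriv (fun s => φ (X, s)) t = v (φ (X, t), t))
    (hπeq : ∀ (X : Fin 3 → ℝ) (t : ℝ),
      deriv (fun s => π (X, s)) t
        = -((jacAt (fun y => v (y, t)) (φ (X, t)))ᵀ *ᵥ π (X, t))) :
    ∀ (X : Fin 3 → ℝ) (t₁ t₂ : ℝ),
      (jacAt (fun Y => φ (Y, t₁)) X)ᵀ *ᵥ π (X, t₁)
        = (jacAt (fun Y => φ (Y, t₂)) X)ᵀ *ᵥ π (X, t₂) := by
  intro X t₁ t₂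
  ext j
  simp only [jacAt_transpose_mulVec_apply]
  refine dotProduct_eq_of_hasDerivAt_adjoint (fun t => jacAt (fun y => v (y, t)) (φ (X, t)))
    (a := fun t => fderiv ℝ (fun Y => φ (Y, t)) X (Pi.single j 1)) (p := fun t => π (X, t))
    (fun t => ?_) (fun t => ?_) t₁ t₂
  · have hflow := hasDerivAt_fderiv_of_flow hφ (X := X)
      ((hv t).differentiable one_ne_zero _) (hφeq · t)
    simpa [jacAt_mulVec] using hflow.clm_apply (hasDerivAt_const t (Pi.single j 1))
  · rw [← hπeq]
    exact ((hπ _).comp t ((differentiableAt_const X).prodMk differentiableAt_id)).hasDerivAt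
end
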